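/- Assume (q, n) is admissible and n > 1, and let AΓL_1(q) denote the subgroup of the group of permutations of F consisting of the semilinear maps v ↦ a·v^{p^i} + b with a ∈ Fˣ, b ∈ F and 0 ≤ i < e. Then AΓL_1(q) normalises A = AGL_1^{(n)}(q), and the homomorphism AΓL_1(q) → Aut(A) sending g to the automorphism h ↦ g h g⁻¹ is a group isomorphism. -/

import Mathlib

/-!
Conjugating `v ↦ c * v + d` by `g : v ↦ a * v ^ p ^ i + b` gives
`v ↦ c ^ p ^ i * v + (a * d ^ p ^ i + b - c ^ p ^ i * b)`, so `Γ` normalises `A`. If `g`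
centralises `A`, the translations force `a = 1` and `i = 0`, and a homothety `c ≠ 1` forces `b = 0`.

Conversely, the translations are the elements of `A` of order dividing `p`, so an automorphism
`ψ` of `A` maps `v ↦ v + d` to `v ↦ v + α d` with `α` additive and injective. Conjugating
translations by homotheties gives `α (c * d) = s_c * α d` for `c ∈ S`, so `α 1⁻¹ • α` is
multiplicative on the subfield generated by `S`, which is all of `F` by admissibility. Hence
`α d = a * d ^ p ^ i`, and `ψ` is conjugation by `v ↦ a * v ^ p ^ i + b₀`, where `b₀` is the
common fixed point of the commuting maps `ψ (v ↦ c * v)`.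
-/

open Equiv Subgroup

section FiniteField

variable {F : Type*} [Field F] [Fintype F] {p e : ℕ} [Fact p.Prime] [CharP F p]

theorem FiniteField.bijective_fin_iterateFrobenius (hq : Fintype.card F = p ^ e) :
    Function.Bijective fun i : Fin e => iterateFrobenius F p i := by
  let _ := ZMod.algebra F p
  obtain rfl : Module.finrank (ZMod p) F = e := by
    rw [Module.card_eq_pow_finrank (K := ZMod p), ZMod.card] at hq
    exact Nat.pow_right_injective (Fact.out : p.Prime).two_le hq
  have hring : Function.Bijective (RingHomClass.toRingHom : (F →ₐ[ZMod p] F) → F →+* F) :=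
    ⟨AlgHom.coe_ringHom_injective, fun τ =>
      ⟨{ τ with commutes' := RingHom.congr_fun (RingHom.ext_zmod (τ.comp (algebraMap _ F)) _) },
        rfl⟩⟩
  convert hring.comp (bijective_frobeniusAlgHom_pow (ZMod p) F) using 1
  ext i x
  simp [iterateFrobenius_def, coe_frobeniusAlgHom, pow_iterate]

theorem Subfield.eq_top_of_units_subset (hq : Fintype.card F = p ^ e) {S : Subgroup Fˣ}
    (hadm : e ∈ lowerBounds {f | 1 ≤ f ∧ p ^ f ≡ 1 [MOD Nat.card S]}) (K : Subfield F)
    (hSK : ∀ c ∈ S, (c : F) ∈ K) : K = ⊤ := by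
  have : Fintype K := Fintype.ofFinite K
  obtain ⟨f, -, hK⟩ := FiniteField.card K p
  have hpos : 1 ≤ p ^ (f : ℕ) := Nat.one_le_pow _ _ (Fact.out : p.Prime).pos
  have hexp : Nat.card S ∣ p ^ (f : ℕ) - 1 := by
    rw [← IsCyclic.exponent_eq_card]
    refine Monoid.exponent_dvd_of_forall_pow_eq_one fun c => Subtype.ext <| Units.ext ?_
    have hc : ((c : Fˣ) : F) ^ p ^ (f : ℕ) = (c : Fˣ) :=
      congr_arg Subtype.val (hK ▸ FiniteField.pow_card (⟨_, hSK c c.2⟩ : K))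
    simp only [Subgroup.coe_pow, Units.val_pow_eq_pow_val, OneMemClass.coe_one, Units.val_one]
    refine mul_left_cancel₀ (Units.ne_zero (c : Fˣ)) ?_
    rw [← pow_succ', Nat.sub_add_cancel hpos, hc, mul_one]
  have hef : e ≤ f := hadm ⟨f.pos, ((Nat.modEq_iff_dvd' hpos).mpr hexp).symm⟩
  refine SetLike.coe_injective (Set.eq_top_of_card_le_of_finite ?_)
  rw [Nat.card_eq_fintype_card, hq, SetLike.coe_sort_coe, Nat.card_eq_fintype_card, hK]
  exact Nat.pow_le_pow_right (Fact.out : p.Prime).pos hef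

end FiniteField

theorem AddMonoidHom.map_mul_of_mem_subfieldClosure {K L : Type*} [DivisionRing K]
    [DivisionRing L] (τ : K →+ L) (h1 : τ 1 = 1) {s : Set K}
    (hs : ∀ c ∈ s, ∀ y, τ (c * y) = τ c * τ y) {x : K} (hx : x ∈ Subfield.closure s) (y : K) :
    τ (x * y) = τ x * τ y := by
  induction hx using Subfield.closure_induction generalizing y with
  | mem c hc => exact hs c hc y
  | one => rw [one_mul, h1, one_mul]
  | add x x' _ _ ih ih' => rw [add_mul, map_add, map_add, ih, ih', add_mul]
  | neg x _ ih => rw [neg_mul, map_neg, map_neg, ih, neg_mul]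
  | mul x x' _ _ ih ih' => rw [mul_assoc, ih, ih', ih, mul_assoc]
  | inv x _ ih =>
    rcases eq_or_ne x 0 with rfl | hx0
    · simp
    have hinv : τ x * τ x⁻¹ = 1 := by rw [← ih, mul_inv_cancel₀ hx0, h1]
    have hcancel : τ x * τ (x⁻¹ * y) = τ x * (τ x⁻¹ * τ y) := by
      rw [← ih, ← mul_assoc, mul_inv_cancel₀ hx0, one_mul, ← mul_assoc, hinv, one_mul]
    exact mul_left_cancel₀ (left_ne_zero_of_mul_eq_one hinv) hcancel

section AffinePerm

variable {F : Type*} [Field F]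

def affinePerm (c : Fˣ) (d : F) : Perm F :=
  (Equiv.mulLeft₀ (c : F) c.ne_zero).trans (Equiv.addRight d)

@[simp]
theorem affinePerm_apply (c : Fˣ) (d v : F) : affinePerm c d v = c * v + d := rfl

theorem affinePerm_inj {c c' : Fˣ} {d d' : F} :
    affinePerm c d = affinePerm c' d' ↔ c = c' ∧ d = d' := by
  refine ⟨fun h => ?_, fun h => h.1 ▸ h.2 ▸ rfl⟩
  have h0 : d = d' := by simpa using congr($h 0)
  have h1 : (c : F) + d = c' + d' := by simpa using congr($h 1)
  exact ⟨Units.ext (by rw [h0] at h1; exact add_right_cancel h1), h0⟩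

theorem affinePerm_mul (c c' : Fˣ) (d d' : F) :
    affinePerm c d * affinePerm c' d' = affinePerm (c * c') (c * d' + d) := by
  ext v
  simp only [Perm.mul_apply, affinePerm_apply, Units.val_mul]
  ring

theorem affinePerm_one_zero : affinePerm (1 : Fˣ) (0 : F) = 1 := by
  ext v
  simp

theorem affinePerm_inv (c : Fˣ) (d : F) :
    (affinePerm c d)⁻¹ = affinePerm c⁻¹ (-(c⁻¹ * d)) := by
  rw [inv_eq_iff_mul_eq_one, affinePerm_mul, mul_inv_cancel, ← affinePerm_one_zero,
    affinePerm_inj]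
  simp

theorem affinePerm_pow (c : Fˣ) (d : F) (k : ℕ) :
    ∃ d', affinePerm c d ^ k = affinePerm (c ^ k) d' := by
  induction k with
  | zero => exact ⟨0, by rw [pow_zero, pow_zero, affinePerm_one_zero]⟩
  | succ k ih =>
    obtain ⟨d', hd'⟩ := ih
    exact ⟨_, by rw [pow_succ, hd', affinePerm_mul, pow_succ]⟩

theorem affinePerm_one_pow (d : F) (k : ℕ) : affinePerm 1 d ^ k = affinePerm 1 (k * d) := by
  induction k with
  | zero => simp [affinePerm_one_zero]
  | succ k ih => rw [pow_succ, ih, affinePerm_mul, one_mul]; push_cast; ring_nf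

theorem isFixedPt_affinePerm_of_commute {s s₀ : Fˣ} {β β₀ : F} (hs₀ : s₀ ≠ 1)
    (h : Commute (affinePerm s β) (affinePerm s₀ β₀)) :
    Function.IsFixedPt (affinePerm s β) (β₀ / (1 - s₀)) := by
  rw [Commute, SemiconjBy, affinePerm_mul, affinePerm_mul, affinePerm_inj] at h
  have hs₀' : (1 : F) - s₀ ≠ 0 := sub_ne_zero.mpr fun h1 => hs₀ (Units.ext h1.symm)
  rw [Function.IsFixedPt, affinePerm_apply]
  field_simp
  linear_combination h.2

theorem affinePerm_pow_char_eq_one_iff {p : ℕ} [Fact p.Prime] [CharP F p] {c : Fˣ} {d : F} :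
    affinePerm c d ^ p = 1 ↔ c = 1 := by
  constructor
  · intro h
    obtain ⟨d', hd'⟩ := affinePerm_pow c d p
    rw [hd', ← affinePerm_one_zero, affinePerm_inj] at h
    exact Units.ext (frobenius_inj F p (by simpa [frobenius_def] using congr_arg Units.val h.1))
  · rintro rfl
    rw [affinePerm_one_pow, CharP.cast_eq_zero, zero_mul, affinePerm_one_zero]

def affineGroup (S : Subgroup Fˣ) : Subgroup (Perm F) where
  carrier := {g | ∃ c ∈ S, ∃ d, g = affinePerm c d}
  mul_mem' := by
    rintro _ _ ⟨c, hc, d, rfl⟩ ⟨c', hc', d', rfl⟩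
    exact ⟨_, S.mul_mem hc hc', _, affinePerm_mul c c' d d'⟩
  one_mem' := ⟨1, S.one_mem, 0, affinePerm_one_zero.symm⟩
  inv_mem' := by
    rintro _ ⟨c, hc, d, rfl⟩
    exact ⟨_, S.inv_mem hc, _, affinePerm_inv c d⟩

theorem mem_affineGroup {S : Subgroup Fˣ} {g : Perm F} :
    g ∈ affineGroup S ↔ ∃ c ∈ S, ∃ d, g = affinePerm c d := Iff.rfl

theorem affinePerm_mem_affineGroup {S : Subgroup Fˣ} {c : Fˣ} (hc : c ∈ S) (d : F) :
    affinePerm c d ∈ affineGroup S := ⟨c, hc, d, rfl⟩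

end AffinePerm

namespace affineGroup

variable {F : Type*} [Field F] (S : Subgroup Fˣ)

def translation (d : F) : affineGroup S := ⟨affinePerm 1 d, affinePerm_mem_affineGroup S.one_mem d⟩

def homothety {c : Fˣ} (hc : c ∈ S) : affineGroup S :=
  ⟨affinePerm c 0, affinePerm_mem_affineGroup hc 0⟩

variable {S}

@[simp]
theorem coe_translation (d : F) : (translation S d : Perm F) = affinePerm 1 d := rfl

@[simp]
theorem coe_homothety {c : Fˣ} (hc : c ∈ S) : (homothety S hc : Perm F) = affinePerm c 0 := rfl

theorem translation_add (d d' : F) :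
    translation S (d + d') = translation S d * translation S d' :=
  Subtype.ext (by simp [affinePerm_mul, add_comm])

theorem homothety_mul_translation {c : Fˣ} (hc : c ∈ S) (d : F) :
    homothety S hc * translation S d = translation S (c * d) * homothety S hc :=
  Subtype.ext (by simp [affinePerm_mul])

theorem commute_homothety {c c' : Fˣ} (hc : c ∈ S) (hc' : c' ∈ S) :
    Commute (homothety S hc) (homothety S hc') :=
  Subtype.ext (by simp [affinePerm_mul, mul_comm])

theorem eq_translation_mul_homothety {h : affineGroup S} {c : Fˣ} (hc : c ∈ S) {d : F}
    (hh : (h : Perm F) = affinePerm c d) : h = translation S d * homothety S hc :=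
  Subtype.ext (by simp [hh, affinePerm_mul])

theorem map_translation_mul_eq_slope_mul (ψ : MulAut (affineGroup S)) {α : F → F}
    (hα : ∀ d, (ψ (translation S d) : Perm F) = affinePerm 1 (α d))
    {c : Fˣ} (hc : c ∈ S) {s : Fˣ} {β : F} (hψc : (ψ (homothety S hc) : Perm F) = affinePerm s β)
    (d : F) : α (c * d) = s * α d := by
  have := congr_arg (fun g => ((ψ g : affineGroup S) : Perm F)) (homothety_mul_translation hc d)
  simp only [map_mul, Subgroup.coe_mul, hα, hψc, affinePerm_mul, affinePerm_inj, Units.val_one,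
    one_mul] at this
  linear_combination this.2.symm

theorem exists_addMonoidHom_map_translation (p : ℕ) [Fact p.Prime] [CharP F p]
    (ψ : MulAut (affineGroup S)) :
    ∃ α : F →+ F, Function.Injective α ∧
      ∀ d, (ψ (translation S d) : Perm F) = affinePerm 1 (α d) := by
  have hψ (d : F) : ∃ d', (ψ (translation S d) : Perm F) = affinePerm 1 d' := by
    obtain ⟨c, -, d', hcd⟩ := (ψ (translation S d)).2
    have hpow : translation S d ^ p = 1 := Subtype.ext (affinePerm_pow_char_eq_one_iff.mpr rfl)
    have : (ψ (translation S d) : Perm F) ^ p = 1 := by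
      rw [← Subgroup.coe_pow, ← map_pow, hpow, map_one, Subgroup.coe_one]
    rw [hcd, affinePerm_pow_char_eq_one_iff] at this
    exact ⟨d', this ▸ hcd⟩
  choose α hα using hψ
  have hα_add (d d' : F) : α (d + d') = α d + α d' := by
    have := congr_arg (fun g => ((ψ g : affineGroup S) : Perm F)) (translation_add d d')
    simp only [map_mul, Subgroup.coe_mul, hα, affinePerm_mul, affinePerm_inj, Units.val_one,
      one_mul] at this
    linear_combination this.2
  refine ⟨AddMonoidHom.mk' α hα_add, fun d d' hdd' => ?_, hα⟩
  have : translation S d = translation S d' :=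
    ψ.injective (Subtype.ext (by simp [hα, show α d = α d' from hdd']))
  simpa [affinePerm_inj] using congr_arg Subtype.val this

end affineGroup

section Semilinear

variable {F : Type*} [Field F] (p : ℕ) [ExpChar F p] [PerfectRing F p]

noncomputable def semilinearPerm (a : Fˣ) (i : ℕ) (b : F) : Perm F :=
  (iterateFrobeniusEquiv F p i).toEquiv.trans (affinePerm a b)

@[simp]
theorem semilinearPerm_apply (a : Fˣ) (i : ℕ) (b v : F) :
    semilinearPerm p a i b v = a * v ^ p ^ i + b := by
  simp [semilinearPerm, iterateFrobenius_def]

theorem semilinearPerm_conj_affinePerm (a c : Fˣ) (i : ℕ) (b d : F) :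
    semilinearPerm p a i b * affinePerm c d * (semilinearPerm p a i b)⁻¹ =
      affinePerm (c ^ p ^ i) (a * d ^ p ^ i + b - (c : F) ^ p ^ i * b) := by
  rw [mul_inv_eq_iff_eq_mul]
  ext v
  simp only [Perm.mul_apply, semilinearPerm_apply, affinePerm_apply, Units.val_pow_eq_pow_val,
    add_pow_expChar_pow, mul_pow]
  ring

theorem semilinearPerm_conj_mem_affineGroup {S : Subgroup Fˣ} (a : Fˣ) (i : ℕ) (b : F)
    {g : Perm F} (hg : g ∈ affineGroup S) :
    semilinearPerm p a i b * g * (semilinearPerm p a i b)⁻¹ ∈ affineGroup S := by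
  obtain ⟨c, hc, d, rfl⟩ := hg
  rw [semilinearPerm_conj_affinePerm]
  exact affinePerm_mem_affineGroup (pow_mem hc _) _

end Semilinear

section Automorphisms

variable {F : Type*} [Field F] [Fintype F] {p e : ℕ} [Fact p.Prime] [CharP F p]
  {S : Subgroup Fˣ}

theorem semilinearPerm_eq_one_of_conj_eq_self (hq : Fintype.card F = p ^ e) (hS : S ≠ ⊥)
    {a : Fˣ} {i : ℕ} {b : F} (hi : i < e)
    (h : ∀ g ∈ affineGroup S, semilinearPerm p a i b * g * (semilinearPerm p a i b)⁻¹ = g) :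
    semilinearPerm p a i b = 1 := by
  have htransl (d : F) : (a : F) * d ^ p ^ i = d := by
    have := h _ (affinePerm_mem_affineGroup S.one_mem d)
    rw [semilinearPerm_conj_affinePerm, affinePerm_inj] at this
    simpa using this.2
  obtain rfl : a = 1 := Units.ext (by simpa using htransl 1)
  obtain rfl : i = 0 := by
    have hfrob : iterateFrobenius F p i = iterateFrobenius F p 0 :=
      RingHom.ext fun x => by simpa [iterateFrobenius_def] using htransl x
    exact congr_arg Fin.val ((FiniteField.bijective_fin_iterateFrobenius hq).1
      (a₁ := ⟨i, hi⟩) (a₂ := ⟨0, by omega⟩) hfrob)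
  obtain ⟨⟨c, hc⟩, hc1⟩ := Subgroup.ne_bot_iff_exists_ne_one.mp hS
  have hb : b - c * b = 0 := by
    have := h _ (affinePerm_mem_affineGroup hc 0)
    rw [semilinearPerm_conj_affinePerm, affinePerm_inj] at this
    simpa using this.2
  have hc1' : (1 : F) - c ≠ 0 := sub_ne_zero.mpr fun h1 => hc1 (Subtype.ext (Units.ext h1.symm))
  have hb0 : b = 0 := by
    simpa [hc1'] using (show (1 - (c : F)) * b = 0 by linear_combination hb)
  ext v
  simp [hb0]

namespace affineGroup

theorem exists_map_translation_eq_frobenius (hq : Fintype.card F = p ^ e)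
    (hadm : e ∈ lowerBounds {f | 1 ≤ f ∧ p ^ f ≡ 1 [MOD Nat.card S]})
    (ψ : MulAut (affineGroup S)) :
    ∃ a : Fˣ, ∃ i < e, ∀ d, (ψ (translation S d) : Perm F) = affinePerm 1 (a * d ^ p ^ i) := by
  obtain ⟨α, hα_inj, hα⟩ := exists_addMonoidHom_map_translation p ψ
  have hα1 : α 1 ≠ 0 := fun h => one_ne_zero (hα_inj (h.trans (map_zero α).symm))
  set τ : F →+ F := (AddMonoidHom.mulLeft (α 1)⁻¹).comp α
  have hτ_apply (x : F) : τ x = (α 1)⁻¹ * α x := rfl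
  have hτ1 : τ 1 = 1 := inv_mul_cancel₀ hα1
  have hτS : ∀ x ∈ Units.val '' (S : Set Fˣ), ∀ y, τ (x * y) = τ x * τ y := by
    rintro _ ⟨c, hc, rfl⟩ y
    obtain ⟨s, -, β, hβ⟩ := (ψ (homothety S hc)).2
    have hslope := map_translation_mul_eq_slope_mul ψ hα hc hβ
    have hs : (s : F) = α c / α 1 := by rw [← mul_one (c : F), hslope 1]; field_simp
    rw [hτ_apply, hτ_apply, hτ_apply, hslope y, hs]
    field_simp
  have hclosure : Subfield.closure (Units.val '' (S : Set Fˣ)) = ⊤ :=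
    Subfield.eq_top_of_units_subset hq hadm _ fun c hc => Subfield.subset_closure ⟨c, hc, rfl⟩
  have hτ_mul (x y : F) : τ (x * y) = τ x * τ y :=
    τ.map_mul_of_mem_subfieldClosure hτ1 hτS (hclosure ▸ Subfield.mem_top x) y
  obtain ⟨⟨i, hi⟩, hτ_frob⟩ := (FiniteField.bijective_fin_iterateFrobenius hq).2
    { τ with map_one' := hτ1, map_mul' := hτ_mul }
  refine ⟨Units.mk0 _ hα1, i, hi, fun d => ?_⟩
  have hτd : τ d = d ^ p ^ i := by
    simpa [iterateFrobenius_def] using (RingHom.congr_fun hτ_frob d).symm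
  rw [hα, Units.val_mk0, ← hτd, hτ_apply, mul_inv_cancel_left₀ hα1]

theorem exists_semilinearPerm_conj_eq (hq : Fintype.card F = p ^ e)
    (hadm : e ∈ lowerBounds {f | 1 ≤ f ∧ p ^ f ≡ 1 [MOD Nat.card S]}) (hS : S ≠ ⊥)
    (ψ : MulAut (affineGroup S)) :
    ∃ a : Fˣ, ∃ i < e, ∃ b : F, ∀ h : affineGroup S,
      (ψ h : Perm F) = semilinearPerm p a i b * h * (semilinearPerm p a i b)⁻¹ := by
  obtain ⟨a, i, hi, ha⟩ := exists_map_translation_eq_frobenius hq hadm ψ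
  have hm (c : Fˣ) (hc : c ∈ S) :
      ∃ β, (ψ (homothety S hc) : Perm F) = affinePerm (c ^ p ^ i) β := by
    obtain ⟨s, -, β, hβ⟩ := (ψ (homothety S hc)).2
    have hslope := map_translation_mul_eq_slope_mul ψ ha hc hβ 1
    simp only [mul_one, one_pow] at hslope
    refine ⟨β, hβ.trans (congr_arg₂ _ (Units.ext ?_) rfl)⟩
    simpa using (mul_left_cancel₀ a.ne_zero (hslope.trans (mul_comm _ _))).symm
  choose β hβ using hm
  obtain ⟨⟨c₀, hc₀⟩, hc₀1⟩ := Subgroup.ne_bot_iff_exists_ne_one.mp hS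
  have hs₀ : c₀ ^ p ^ i ≠ 1 := fun h => hc₀1 <| Subtype.ext <| Units.ext <|
    iterateFrobenius_inj F p i (by simpa [iterateFrobenius_def] using congr_arg Units.val h)
  set b := β c₀ hc₀ / (1 - ((c₀ ^ p ^ i : Fˣ) : F))
  refine ⟨a, i, hi, b, fun h => ?_⟩
  obtain ⟨c, hc, d, hh⟩ := h.2
  have hfix : Function.IsFixedPt (affinePerm (c ^ p ^ i) (β c hc)) b := by
    refine isFixedPt_affinePerm_of_commute hs₀ ?_
    rw [← hβ, ← hβ]
    exact ((commute_homothety hc hc₀).map ψ).map (affineGroup S).subtype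
  rw [hh, semilinearPerm_conj_affinePerm, eq_translation_mul_homothety hc hh, map_mul,
    Subgroup.coe_mul, ha, hβ c hc, affinePerm_mul, affinePerm_inj]
  simp only [Function.IsFixedPt, affinePerm_apply, Units.val_pow_eq_pow_val] at hfix
  refine ⟨one_mul _, ?_⟩
  push_cast
  linear_combination hfix

end affineGroup

end Automorphisms

theorem AGammaL_is_automorphism_group_of_AGL_general
    (p e n : ℕ) (hp : p.Prime)
    (F : Type) [Field F] [Fintype F] (hq : Fintype.card F = p ^ e)
    (S : Subgroup Fˣ) (hS : Nat.card S = n)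
    (hadm : IsLeast {i : ℕ | 1 ≤ i ∧ p ^ i ≡ 1 [MOD n]} e)
    (hn1 : 1 < n)
    (A : Subgroup (Equiv.Perm F))
    (hA : ∀ g : Equiv.Perm F,
      g ∈ A ↔ ∃ a ∈ S, ∃ b : F, ∀ v : F, g v = (a : F) * v + b)
    (Γ : Subgroup (Equiv.Perm F))
    (hΓ : ∀ g : Equiv.Perm F,
      g ∈ Γ ↔ ∃ a : Fˣ, ∃ b : F, ∃ i < e, ∀ v : F, g v = (a : F) * v ^ p ^ i + b) :
    (∀ g ∈ Γ, ∀ h ∈ A, g * h * g⁻¹ ∈ A) ∧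
      ∃ φ : Γ →* MulAut A,
        (∀ (g : Γ) (h : A),
          ((φ g h : A) : Equiv.Perm F) =
            (g : Equiv.Perm F) * (h : Equiv.Perm F) * (g : Equiv.Perm F)⁻¹) ∧
        Function.Bijective φ := by
  have : Fact p.Prime := ⟨hp⟩
  have : CharP F p := charP_of_card_eq_prime_pow hq
  subst hS
  obtain rfl : A = affineGroup S :=
    Subgroup.ext fun g => (hA g).trans (by simp [mem_affineGroup, Equiv.ext_iff])
  have hS : S ≠ ⊥ := (Subgroup.one_lt_card_iff_ne_bot S).mp hn1
  have hΓ_semilinear (g : Γ) :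
      ∃ a : Fˣ, ∃ i < e, ∃ b : F, (g : Perm F) = semilinearPerm p a i b := by
    obtain ⟨a, b, i, hi, hg⟩ := (hΓ g).mp g.2
    exact ⟨a, i, hi, b, Equiv.ext fun v => by simp [hg]⟩
  have hΓ_le : Γ ≤ normalizer (affineGroup S : Set (Perm F)) :=
    le_normalizer_iff.mpr fun g hg h hh => by
      obtain ⟨a, i, -, b, rfl⟩ := hΓ_semilinear ⟨g, hg⟩
      exact semilinearPerm_conj_mem_affineGroup p a i b hh
  refine ⟨le_normalizer_iff.mp hΓ_le, (affineGroup S).normalizerMonoidHom.comp (inclusion hΓ_le),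
    fun _ _ => rfl, (injective_iff_map_eq_one _).mpr fun g hg => ?_, fun ψ => ?_⟩
  · obtain ⟨a, i, hi, b, hg_eq⟩ := hΓ_semilinear g
    refine Subtype.ext (hg_eq.trans (semilinearPerm_eq_one_of_conj_eq_self hq hS hi fun h hh => ?_))
    rw [← hg_eq]
    exact congr_arg Subtype.val (DFunLike.congr_fun hg ⟨h, hh⟩)
  · obtain ⟨a, i, hi, b, hψ⟩ := affineGroup.exists_semilinearPerm_conj_eq hq hadm.2 hS ψ
    refine ⟨⟨_, (hΓ _).mpr ⟨a, b, i, hi, semilinearPerm_apply p a i b⟩⟩, MulEquiv.ext fun h => ?_⟩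
    exact Subtype.ext (hψ h).symm

/-- Let `p` be prime, `e ≥ 1`, `q = p^e`, `F` a finite field with `q`
elements, `n` a divisor of `q - 1` (even if `p` is odd), and `S` the subgroup of order
`n` of `Fˣ`.  Assume `(q, n)` is admissible and `n > 1`.  Let `A = AGL₁⁽ⁿ⁾(q)` be the
subgroup of `Perm F` of affine maps `v ↦ a v + b` with `a ∈ S`, `b ∈ F`, and let
`Γ = AΓL₁(q)` be the subgroup of `Perm F` of semilinear maps `v ↦ a·v^{p^i} + b` with
`a ∈ Fˣ`, `b ∈ F`, `0 ≤ i < e`.  Then `Γ` normalises `A`, and the homomorphism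
`Γ → Aut(A)`, `g ↦ (h ↦ g h g⁻¹)`, is a group isomorphism. -/
theorem AGammaL_is_automorphism_group_of_AGL
    (p e n : ℕ) (hp : p.Prime) (he : 1 ≤ e)
    (F : Type) [Field F] [Fintype F] (hq : Fintype.card F = p ^ e)
    (hn : n ∣ p ^ e - 1) (hpar : Odd p → Even n)
    (S : Subgroup Fˣ) (hS : Nat.card S = n)
    (hadm : IsLeast {i : ℕ | 1 ≤ i ∧ p ^ i ≡ 1 [MOD n]} e)
    (hn1 : 1 < n)
    (A : Subgroup (Equiv.Perm F))
    (hA : ∀ g : Equiv.Perm F,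
      g ∈ A ↔ ∃ a ∈ S, ∃ b : F, ∀ v : F, g v = (a : F) * v + b)
    (Γ : Subgroup (Equiv.Perm F))
    (hΓ : ∀ g : Equiv.Perm F,
      g ∈ Γ ↔ ∃ a : Fˣ, ∃ b : F, ∃ i < e, ∀ v : F, g v = (a : F) * v ^ p ^ i + b) :
    (∀ g ∈ Γ, ∀ h ∈ A, g * h * g⁻¹ ∈ A) ∧
      ∃ φ : Γ →* MulAut A,
        (∀ (g : Γ) (h : A),
          ((φ g h : A) : Equiv.Perm F) =
            (g : Equiv.Perm F) * (h : Equiv.Perm F) * (g : Equiv.Perm F)⁻¹) ∧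
        Function.Bijective φ :=
  AGammaL_is_automorphism_group_of_AGL_general p e n hp F hq S hS hadm hn1 A hA Γ hΓ
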